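/- A linear map Φ from m×m matrices to n×n matrices is completely positive if and only if its Choi matrix Φ_μ = Σ_{i,k} Φ(|i⟩⟨k|) ⊗ |i⟩⟨k| (an nm×nm block matrix with blocks Φ(|i⟩⟨k|)) is positive semidefinite. -/

import Mathlib

open Matrix Kronecker
open scoped ComplexOrder

open scoped Classical in
/-- Positive semidefinite square root (zero if the matrix is not PSD). -/
noncomputable def psqrt {n : Type*} [Fintype n] [DecidableEq n] (A : Matrix n n ℂ) : Matrix n n ℂ :=
  if h : A.PosSemidef then
    h.1.eigenvectorUnitary.1 * diagonal ((↑) ∘ (√·) ∘ h.1.eigenvalues) *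
      (star h.1.eigenvectorUnitary : Matrix n n ℂ) else 0

/-- Matrix absolute value `|A| = √(Aᴴ A)`. -/
noncomputable def matAbs {n : Type*} [Fintype n] [DecidableEq n] (A : Matrix n n ℂ) : Matrix n n ℂ :=
  psqrt (Aᴴ * A)

/-- Ampliation `id_k ⊗ Φ` of a linear map on matrices, acting blockwise. -/
def amp {m n : Type*} (Φ : Matrix m m ℂ →ₗ[ℂ] Matrix n n ℂ) {k : Type*}
    (M : Matrix (k × m) (k × m) ℂ) : Matrix (k × n) (k × n) ℂ :=
  Matrix.of fun p q => Φ (Matrix.of fun a b => M (p.1, a) (q.1, b)) p.2 q.2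

/-- The Choi matrix of `Φ`, with blocks `Φ(E_{ik})`. -/
noncomputable def choi {m n : Type*} [DecidableEq m]
    (Φ : Matrix m m ℂ →ₗ[ℂ] Matrix n n ℂ) : Matrix (n × m) (n × m) ℂ :=
  Matrix.of fun p q => Φ (Matrix.single p.2 q.2 1) p.1 q.1

/-! If `Φ` is completely positive, apply `id_m ⊗ Φ` to the projection `Ω Ωᴴ` onto the maximally
entangled vector `Ω = ∑ᵢ eᵢ ⊗ eᵢ`: its blocks are the `E_{ik}`, so the result is the Choi matrix
with the tensor factors swapped. Conversely, writing a positive semidefinite Choi matrix as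
`∑ᵣ vᵣ vᵣᴴ` gives Kraus operators `Kᵣ` with `Φ A = ∑ᵣ Kᵣ A Kᵣᴴ`; then `id_k ⊗ Φ` is
`M ↦ ∑ᵣ (1 ⊗ Kᵣ) M (1 ⊗ Kᵣ)ᴴ`, which preserves positivity. -/

section KrausForm

variable {m n : Type*} [Fintype m] (Φ : Matrix m m ℂ →ₗ[ℂ] Matrix n n ℂ)

theorem map_apply_eq_sum_choi [DecidableEq m] (A : Matrix m m ℂ) (x y : n) :
    Φ A x y = ∑ i, ∑ j, A i j * choi Φ (x, i) (y, j) := by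
  conv_lhs => rw [matrix_eq_sum_single A]
  simp only [map_sum, Matrix.sum_apply]
  refine Finset.sum_congr rfl fun i _ => Finset.sum_congr rfl fun j _ => ?_
  rw [← mul_one (A i j), ← smul_eq_mul, ← Matrix.smul_single, map_smul]
  simp [choi]

theorem map_eq_kraus_of_choi_eq_sum_vecMulVec [DecidableEq m] {ι : Type*} [Fintype ι]
    (v : ι → n × m → ℂ) (hv : choi Φ = ∑ r, vecMulVec (v r) (star (v r))) (A : Matrix m m ℂ) :
    Φ A = ∑ r, of (Function.curry (v r)) * A * (of (Function.curry (v r)))ᴴ := by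
  ext x y
  simp only [map_apply_eq_sum_choi, hv, Matrix.sum_apply, vecMulVec_apply, Finset.mul_sum]
  rw [Finset.sum_comm_cycle]
  refine Finset.sum_congr rfl fun r _ => ?_
  simp only [mul_apply, conjTranspose_apply, of_apply, Function.curry_apply, Pi.star_apply,
    Finset.sum_mul]
  rw [Finset.sum_comm]
  exact Finset.sum_congr rfl fun i _ => Finset.sum_congr rfl fun j _ => by ring

theorem amp_eq_sum_of_kraus {ι : Type*} [Fintype ι] (K : ι → Matrix n m ℂ)
    (hK : ∀ A, Φ A = ∑ r, K r * A * (K r)ᴴ) {k : Type*} [Fintype k] [DecidableEq k]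
    (M : Matrix (k × m) (k × m) ℂ) :
    amp Φ M = ∑ r, ((1 : Matrix k k ℂ) ⊗ₖ K r) * M * ((1 : Matrix k k ℂ) ⊗ₖ K r)ᴴ := by
  ext p q
  simp only [amp, of_apply, hK, Matrix.sum_apply, mul_apply, conjTranspose_apply,
    kroneckerMap_apply, Fintype.sum_prod_type, one_apply]
  simp [apply_ite (starRingEnd ℂ)]

theorem posSemidef_amp_of_kraus [Fintype n] {ι : Type*} [Fintype ι] (K : ι → Matrix n m ℂ)
    (hK : ∀ A, Φ A = ∑ r, K r * A * (K r)ᴴ) {k : Type*} [Fintype k] [DecidableEq k]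
    {M : Matrix (k × m) (k × m) ℂ} (hM : M.PosSemidef) : (amp Φ M).PosSemidef := by
  rw [amp_eq_sum_of_kraus Φ K hK]
  exact posSemidef_sum _ fun r _ => hM.mul_mul_conjTranspose_same _

end KrausForm

def maxEntangled (m : Type*) [DecidableEq m] : m × m → ℂ := fun p => if p.1 = p.2 then 1 else 0

theorem block_vecMulVec_maxEntangled {m : Type*} [DecidableEq m] (i j : m) :
    (of fun a b => vecMulVec (maxEntangled m) (star (maxEntangled m)) (i, a) (j, b)) =
      single i j 1 := by
  ext a b
  simp only [of_apply, vecMulVec_apply, maxEntangled, single_apply, Pi.star_apply, ite_and]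
  split_ifs <;> simp

theorem choi_eq_submatrix_amp {m n : Type*} [DecidableEq m]
    (Φ : Matrix m m ℂ →ₗ[ℂ] Matrix n n ℂ) :
    choi Φ = (amp Φ (vecMulVec (maxEntangled m) (star (maxEntangled m)))).submatrix
      Prod.swap Prod.swap := by
  ext p q
  simp only [choi, amp, of_apply, submatrix_apply, Prod.fst_swap, Prod.snd_swap,
    block_vecMulVec_maxEntangled]

theorem amp_submatrix_prodMap {m n k k' : Type*} (Φ : Matrix m m ℂ →ₗ[ℂ] Matrix n n ℂ)
    (M : Matrix (k × m) (k × m) ℂ) (f : k' → k) :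
    amp Φ (M.submatrix (Prod.map f id) (Prod.map f id)) =
      (amp Φ M).submatrix (Prod.map f id) (Prod.map f id) :=
  rfl

theorem choi_theorem_general {m n : Type*} [Fintype m] [DecidableEq m] [Fintype n]
    (Φ : Matrix m m ℂ →ₗ[ℂ] Matrix n n ℂ) :
    (∀ k : ℕ, ∀ M : Matrix (Fin k × m) (Fin k × m) ℂ, M.PosSemidef → (amp Φ M).PosSemidef) ↔
      (choi Φ).PosSemidef := by
  constructor
  · intro hCP
    let e := Fintype.equivFin m
    have hΩ := (posSemidef_vecMulVec_self_star (maxEntangled m)).submatrix (Prod.map e.symm id)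
    have hampΩ := hCP _ _ hΩ
    rw [amp_submatrix_prodMap] at hampΩ
    rw [choi_eq_submatrix_amp]
    simpa [Prod.map_comp_map] using (hampΩ.submatrix (Prod.map e id)).submatrix Prod.swap
  · intro hchoi k M hM
    obtain ⟨_, v, hv⟩ := posSemidef_iff_eq_sum_vecMulVec.mp hchoi
    exact posSemidef_amp_of_kraus Φ _ (map_eq_kraus_of_choi_eq_sum_vecMulVec Φ v hv) hM

theorem choi_theorem {m n : Type*} [Fintype m] [DecidableEq m] [Fintype n] [DecidableEq n]
    (Φ : Matrix m m ℂ →ₗ[ℂ] Matrix n n ℂ) :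
    (∀ k : ℕ, ∀ M : Matrix (Fin k × m) (Fin k × m) ℂ, M.PosSemidef → (amp Φ M).PosSemidef) ↔
      (choi Φ).PosSemidef :=
  choi_theorem_general Φ
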